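/- arXiv:2312.11528 — 3 statements merged into one kernel-verified Lean document; each statement's English description precedes it below -/
import Mathlib

section
/- Let α be a complete Boolean algebra, β a complete Heyting algebra, and f : α → β a map preserving finite meets, arbitrary suprema, ⊤ and ⊥. Then f preserves arbitrary infima: f(⨅ᵢ aᵢ) = ⨅ᵢ f(aᵢ) for every family (aᵢ). -/
/-- A map from a complete Boolean algebra to a frame preserving finite meets,
arbitrary suprema, `⊤` and `⊥` preserves arbitrary infima. -/
theorem stmt_2 {α β : Type*} [CompleteBooleanAlgebra α] [Order.Frame β]
    (f : α → β)
    (hmeet : ∀ x y : α, f (x ⊓ y) = f x ⊓ f y)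
    (htop : f ⊤ = ⊤) (hbot : f ⊥ = ⊥)
    (hsup : ∀ s : Set α, f (sSup s) = sSup (f '' s)) :
    ∀ {I : Type*} (a : I → α), f (⨅ i, a i) = ⨅ i, f (a i) := by
  intro I a
  have hmono : Monotone f := by
    intro x y hxy
    have h := hmeet x y
    rw [inf_eq_left.2 hxy] at h
    rw [h]
    exact inf_le_right
  have hiSup : ∀ (g : I → α), f (⨆ j, g j) = ⨆ j, f (g j) := by
    intro g
    rw [← sSup_range, hsup, ← Set.range_comp, sSup_range]
    rfl
  have hjoin : ∀ x y : α, f (x ⊔ y) = f x ⊔ f y := by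
    intro x y
    have := hsup {x, y}
    simpa [Set.image_pair] using this
  set b := ⨅ i, a i with hbdef
  have hb : bᶜ = ⨆ i, (a i)ᶜ := by simp [hbdef, compl_iInf]
  have hcompl_top : f b ⊔ f bᶜ = ⊤ := by rw [← hjoin, sup_compl_eq_top, htop]
  have h1 : (⨅ i, f (a i)) ⊓ f bᶜ ≤ ⊥ := by
    rw [hb, hiSup, inf_iSup_eq]
    apply iSup_le
    intro j
    calc (⨅ i, f (a i)) ⊓ f ((a j)ᶜ) ≤ f (a j) ⊓ f ((a j)ᶜ) :=
          inf_le_inf_right _ (iInf_le _ j)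
      _ = ⊥ := by rw [← hmeet, inf_compl_eq_bot, hbot]
  refine le_antisymm (le_iInf fun i => hmono (iInf_le a i)) ?_
  have h2 : (⨅ i, f (a i)) = (⨅ i, f (a i)) ⊓ (f b ⊔ f bᶜ) := by
    rw [hcompl_top, inf_top_eq]
  calc (⨅ i, f (a i)) = ((⨅ i, f (a i)) ⊓ f b) ⊔ ((⨅ i, f (a i)) ⊓ f bᶜ) := by
        rw [← inf_sup_left, ← h2]
    _ ≤ f b ⊔ ⊥ := sup_le_sup inf_le_right h1
    _ = f b := sup_bot_eq _
end

section
/- Let C be a small category with pullbacks, J a subcanonical Grothendieck topology on C, and X an object of C. For a sieve S on X that is a J-closed subpresheaf of the representable presheaf on X, we have: S, regarded as a subobject of y(X) in sheaves, equals the supremum of the family of subobjects y(C) → y(X) ranging over monomorphisms in S, whenever every morphism f in S factors through a monomorphism in S (e.g., when C is regular and S is closed under images). -/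
open CategoryTheory CategoryTheory.Limits

/-- Let `J` be a subcanonical Grothendieck topology on a small category `C`
with pullbacks, and let `S` be a `J`-closed sieve on `X` such that every
morphism in `S` factors through a monomorphism belonging to `S`. Then, as a
subobject of `y(X)` in sheaves (i.e. as a `J`-closed sieve), `S` is the
supremum (the `J`-closure of the join) of the sieves generated by the
monomorphisms belonging to `S`. -/
theorem stmt_8 {C : Type*} [SmallCategory C] [HasPullbacks C]
    (J : GrothendieckTopology C) [J.Subcanonical]
    (X : C) (S : Sieve X) (hclosed : J.IsClosed S)
    (hfac : ∀ {D : C} (f : D ⟶ X), S f →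
      ∃ (E : C) (m : E ⟶ X) (_ : Mono m) (g : D ⟶ E), S m ∧ g ≫ m = f) :
    S = J.close (⨆ i : {p : Σ E : C, E ⟶ X // S p.2 ∧ Mono p.2},
      Sieve.generate (Presieve.singleton i.1.2)) := by
  apply le_antisymm
  · intro D f hf
    obtain ⟨E, m, hm, g, hmS, hgm⟩ := hfac f hf
    apply J.le_close
    have : Sieve.generate (Presieve.singleton (⟨⟨E, m⟩, hmS, hm⟩ :
        {p : Σ E : C, E ⟶ X // S p.2 ∧ Mono p.2}).1.2) ≤ _ :=
      le_iSup (fun i : {p : Σ E : C, E ⟶ X // S p.2 ∧ Mono p.2} =>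
        Sieve.generate (Presieve.singleton i.1.2)) _
    apply this
    exact ⟨E, g, m, Presieve.singleton.mk, hgm⟩
  · refine J.le_close_of_isClosed ?_ hclosed
    apply iSup_le
    rintro ⟨⟨E, m⟩, hmS, hm⟩
    rintro D f ⟨F, g, h, ⟨⟩, rfl⟩
    exact S.downward_closed hmS g
end

section
/- Let C be a small category and J_¬¬ the dense (double-negation) Grothendieck topology on C, where a sieve S on c is covering iff for every f : d → c there exists g : e → d with f ∘ g ∈ S. Then the topos of sheaves Sh(C, J_¬¬) is Boolean, i.e., every subobject lattice in Sh(C, J_¬¬) is a Boolean algebra. -/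
/-!
A subsheaf `A` of `F` is determined by the subpresheaf `G` of sections lying in it. Let `¬G`
consist of the sections no restriction of which lies in `G`. For the dense topology `¬G` is
again a sheaf, and every section of `F` lies locally in `G ⊔ ¬G`: given a section `s` and a map
`f`, either some further restriction of `s` lands in `G`, or the restriction along `f` already
lies in `¬G`. Since `G ⊓ ¬G = ⊥`, the subsheaf `¬G` is a complement of `A`.
-/

open CategoryTheory CategoryTheory.Limits

instance {C : Type u} [SmallCategory C] : HasFiniteColimits (Sheaf (GrothendieckTopology.dense (C := C)) (Type u)) := inferInstance

instance {C : Type u} [SmallCategory C] : HasInitial (Sheaf (GrothendieckTopology.dense (C := C)) (Type u)) :=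
  hasColimitsOfShape_of_hasFiniteColimits
    (C := Sheaf (GrothendieckTopology.dense (C := C)) (Type u)) (J := Discrete PEmpty)

instance {C : Type u} [SmallCategory C] : HasBinaryCoproducts (Sheaf (GrothendieckTopology.dense (C := C)) (Type u)) :=
  hasColimitsOfShape_of_hasFiniteColimits
    (C := Sheaf (GrothendieckTopology.dense (C := C)) (Type u)) (J := Discrete WalkingPair)

open Opposite

universe w v u

namespace CategoryTheory.Subfunctor

variable {C : Type u} [Category.{v} C] {F : Cᵒᵖ ⥤ Type w}

/-- The Heyting negation of `G` in the lattice of subfunctors of `F`. -/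
def hnot (G : Subfunctor F) : Subfunctor F where
  obj U := {x | ∀ ⦃V : C⦄ (f : V ⟶ U.unop), F.map f.op x ∉ G.obj (op V)}
  map i x hx V f := by simpa using hx (f ≫ i.unop)

lemma inf_hnot_eq_bot (G : Subfunctor F) : G ⊓ G.hnot = ⊥ := by
  refine eq_bot_iff.2 fun U x ⟨hG, hnG⟩ => hnG (𝟙 _) ?_
  simpa using hG

lemma sheafify_mono {J : GrothendieckTopology C} {G G' : Subfunctor F} (h : G ≤ G') :
    G.sheafify J ≤ G'.sheafify J :=
  fun _ _ hs => J.superset_covering (fun _ _ hf => h _ hf) hs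

lemma hnot_isSheaf_dense (hF : Presieve.IsSheaf GrothendieckTopology.dense F)
    (G : Subfunctor F) : Presieve.IsSheaf GrothendieckTopology.dense G.hnot.toFunctor := by
  rw [G.hnot.isSheaf_iff hF]
  intro U s hs V f hf
  obtain ⟨Z, g, hg⟩ := GrothendieckTopology.dense_covering.mp hs f
  refine hg (𝟙 Z) ?_
  simpa using G.map g.op hf

lemma sheafify_dense_sup_hnot_eq_top (G : Subfunctor F) :
    (G ⊔ G.hnot).sheafify GrothendieckTopology.dense = ⊤ := by
  refine eq_top_iff.2 fun U s _ => GrothendieckTopology.dense_covering.mpr fun {Y} f => ?_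
  by_cases h : ∃ (Z : C) (g : Z ⟶ Y), F.map (g ≫ f).op s ∈ G.obj (op Z)
  · obtain ⟨Z, g, hg⟩ := h
    exact ⟨Z, g, Or.inl hg⟩
  · push Not at h
    refine ⟨Y, 𝟙 Y, Or.inr fun Z g => ?_⟩
    simpa using h Z g

end CategoryTheory.Subfunctor

namespace CategoryTheory.Sheaf

variable {C : Type u} [Category.{v} C] {J : GrothendieckTopology C} {F : Sheaf J (Type w)}

lemma range_arrow_hom_le {X Y : Subobject F} (h : X ≤ Y) :
    Subfunctor.range X.arrow.hom ≤ Subfunctor.range Y.arrow.hom := by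
  rw [← Subobject.ofLE_arrow h]
  exact Subfunctor.range_comp_le _ _

lemma range_mk_arrow_hom {G : Sheaf J (Type w)} (f : G ⟶ F) [Mono f] :
    Subfunctor.range (Subobject.mk f).arrow.hom = Subfunctor.range f.hom := by
  refine le_antisymm ?_ ?_
  · rw [← Subobject.underlyingIso_hom_comp_eq_mk]
    exact Subfunctor.range_comp_le _ _
  · conv_lhs => rw [← Subobject.underlyingIso_arrow f]
    exact Subfunctor.range_comp_le _ _

def ofSubfunctor (G : Subfunctor F.obj) (hG : Presieve.IsSheaf J G.toFunctor) :
    Sheaf J (Type w) :=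
  ⟨G.toFunctor, (isSheaf_iff_isSheaf_of_type J _).2 hG⟩

def ofSubfunctorι (G : Subfunctor F.obj) (hG : Presieve.IsSheaf J G.toFunctor) :
    ofSubfunctor G hG ⟶ F :=
  ⟨G.ι⟩

instance (G : Subfunctor F.obj) (hG : Presieve.IsSheaf J G.toFunctor) :
    Mono (ofSubfunctorι G hG) :=
  (sheafToPresheaf J _).mono_of_mono_map (inferInstanceAs (Mono G.ι))

lemma range_mk_ofSubfunctorι_arrow_hom (G : Subfunctor F.obj)
    (hG : Presieve.IsSheaf J G.toFunctor) :
    Subfunctor.range (Subobject.mk (ofSubfunctorι G hG)).arrow.hom = G := by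
  rw [range_mk_arrow_hom]
  exact Subfunctor.range_ι G

lemma subobject_eq_bot_of_range_eq_bot [HasInitial (Sheaf J (Type w))]
    [InitialMonoClass (Sheaf J (Type w))] (X : Subobject F)
    (h : Subfunctor.range X.arrow.hom = ⊥) : X = ⊥ := by
  have hempty (U : Cᵒᵖ) : IsEmpty ((X : Sheaf J (Type w)).obj.obj U) :=
    ⟨fun x => (h ▸ ⟨x, rfl⟩ : X.arrow.hom.app U x ∈ (⊥ : Subfunctor F.obj).obj U)⟩
  have hX : IsInitial (X : Sheaf J (Type w)) :=
    IsInitial.ofUniqueHom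
      (fun Y => ⟨{ app U := ↾fun x => (hempty U).elim x
                   naturality _ _ _ := by ext x; exact (hempty _).elim x }⟩)
      fun Y m => by ext U x; exact (hempty U).elim x
  exact le_bot_iff.1 (Subobject.le_of_comm (hX.to _) (hX.hom_ext _ _))

lemma subobject_eq_top_of_sheafify_range_eq_top [HasSheafify J (Type w)] (X : Subobject F)
    (h : (Subfunctor.range X.arrow.hom).sheafify J = ⊤) : X = ⊤ := by
  have : IsLocallySurjective X.arrow :=
    (Presheaf.isLocallySurjective_iff_range_sheafify_eq_top' J _).2 h
  have := isIso_of_mono_of_epi X.arrow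
  exact Subobject.eq_top_of_isIso_arrow X

end CategoryTheory.Sheaf

open CategoryTheory.Sheaf in
/-- The topos of sheaves for the dense (double-negation) topology on a small
category is Boolean: every subobject of every sheaf is complemented (and
subobject lattices of a topos are distributive, hence Boolean algebras). -/
theorem stmt_10 {C : Type u} [SmallCategory C]
    (F : Sheaf (GrothendieckTopology.dense (C := C)) (Type u))
    (A : Subobject F) :
    ∃ B : Subobject F, A ⊓ B = ⊥ ∧ A ⊔ B = ⊤ := by
  set G := Subfunctor.range A.arrow.hom
  have hG := G.hnot_isSheaf_dense ((isSheaf_iff_isSheaf_of_type _ _).1 F.property)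
  have hB := range_mk_ofSubfunctorι_arrow_hom G.hnot hG
  refine ⟨Subobject.mk (ofSubfunctorι G.hnot hG), ?_, ?_⟩
  · refine subobject_eq_bot_of_range_eq_bot _ (eq_bot_iff.2 ?_)
    calc _ ≤ G ⊓ G.hnot :=
          le_inf (range_arrow_hom_le inf_le_left) ((range_arrow_hom_le inf_le_right).trans hB.le)
      _ = ⊥ := G.inf_hnot_eq_bot
  · refine subobject_eq_top_of_sheafify_range_eq_top _ (eq_top_iff.2 ?_)
    calc ⊤ = (G ⊔ G.hnot).sheafify _ := G.sheafify_dense_sup_hnot_eq_top.symm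
      _ ≤ _ := Subfunctor.sheafify_mono <|
          sup_le (range_arrow_hom_le le_sup_left) (hB.ge.trans (range_arrow_hom_le le_sup_right))
end
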